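/- Let m_q be inverted dropout with keep probability q∈(0,1] on the grid U, and let h:U→ℝ be a deterministic field satisfying 𝓔_int(h) > 0. Define the coherence score κ(h) = (Σ_{x∈U} d_x^int h(x)²)/(2·𝓔_int(h)). Then the expected relative intrinsic energy inflation satisfies 𝔼[𝓔_int(m_q ⊙ h)] / 𝓔_int(h) = 1 + ((1−q)/q)·κ(h). -/

import Mathlib

open MeasureTheory Real

noncomputable section
/-- A point of the `H × W` feature grid `U = {1,…,H} × {1,…,W}` (0-indexed model). -/
abbrev GridPt (H W : ℕ) := Fin H × Fin W

/-- Embedding of the grid into `ℤ × ℤ` with coordinates in `{1,…,H} × {1,…,W}`. -/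
def gridZ {H W : ℕ} (x : GridPt H W) : ℤ × ℤ := ((x.1 : ℤ) + 1, (x.2 : ℤ) + 1)

/-- Nearest-neighbor adjacency on `ℤ × ℤ`: `ℓ¹`-distance one. -/
def adjZ (p q : ℤ × ℤ) : Bool := |p.1 - q.1| + |p.2 - q.2| == 1

/-- The Dirichlet Laplacian matrix on the grid `U` with edge weights `c` and zero
(auxiliary Dirichlet) boundary: `(L_U φ)(x) = ∑_{y : {x,y} ∈ E} c_{xy} (φ(x) − φ̄(y))`
where `φ̄` extends `φ` by zero outside `U`. -/
def dirichletLap (H W : ℕ) (c : ℤ × ℤ → ℤ × ℤ → ℝ) :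
    Matrix (GridPt H W) (GridPt H W) ℝ := fun x y =>
  if x = y then
    ((([((1 : ℤ), (0 : ℤ)), (-1, 0), (0, 1), (0, -1)] : List (ℤ × ℤ)).map
      (fun d => c (gridZ x) (gridZ x + d))).sum)
  else if adjZ (gridZ x) (gridZ y) then -c (gridZ x) (gridZ y) else 0
/-- Intrinsic energy `𝓔_int(f) = (1/2) ∑_{{x,y} ∈ E_int} c_{xy} (f(x) − f(y))²`,
written as `1/4` times the sum over ordered adjacent pairs in `U`. -/
def Eint {H W : ℕ} (c : ℤ × ℤ → ℤ × ℤ → ℝ) (f : GridPt H W → ℝ) : ℝ :=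
  (1 / 4) * ∑ x : GridPt H W, ∑ y : GridPt H W,
    if adjZ (gridZ x) (gridZ y) then c (gridZ x) (gridZ y) * (f x - f y) ^ 2 else 0

/-- Intrinsic weighted degree `d_x^int = ∑_{y : {x,y} ∈ E_int} c_{xy}`. -/
def dInt {H W : ℕ} (c : ℤ × ℤ → ℤ × ℤ → ℝ) (x : GridPt H W) : ℝ :=
  ∑ y : GridPt H W, if adjZ (gridZ x) (gridZ y) then c (gridZ x) (gridZ y) else 0

/-- Interior (intrinsic) graph Laplacian `L_int` on `U`, with no boundary term. -/
def Lint (H W : ℕ) (c : ℤ × ℤ → ℤ × ℤ → ℝ) :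
    Matrix (GridPt H W) (GridPt H W) ℝ := fun x y =>
  if x = y then dInt c x
  else if adjZ (gridZ x) (gridZ y) then -c (gridZ x) (gridZ y) else 0
/-- Inverted-dropout mask `m_q(x) = b(x)/q` built from a Boolean keep pattern `ω`. -/
def maskD {ι : Type*} (q : ℝ) (ω : ι → Bool) (x : ι) : ℝ :=
  (if ω x then (1 : ℝ) else 0) / q

/-- The law of i.i.d. `Bernoulli(q)` keep variables indexed by `ι`
(the canonical product measure, i.e. i.i.d. coordinates). -/
def bernoulliPi (ι : Type*) [Fintype ι] (q : ℝ) (hq : q ≤ 1) :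
    MeasureTheory.Measure (ι → Bool) :=
  MeasureTheory.Measure.pi fun _ =>
    (PMF.bernoulli (Real.toNNReal q) (Real.toNNReal_le_one.mpr hq)).toMeasure
/-! For distinct sites `x ≠ y` the mask entries are independent with `𝔼 m = 1` and `𝔼 m² = 1/q`,
so `𝔼 (m(x) a - m(y) b)² = a²/q + b²/q - 2ab = (a - b)² + ((1 - q)/q)(a² + b²)`. Summing this over
the intrinsic edges, the diagonal excess `((1 - q)/q)(h(x)² + h(y)²)` of each edge collects, by
symmetry of `c`, into `((1 - q)/q) · ∑ₓ d_x^int h(x)² / 2`, which is `((1 - q)/q) κ(h) 𝓔_int(h)`. -/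

open Finset ProbabilityTheory

section Dropout

variable {ι : Type*} [Fintype ι] {q : ℝ}

instance (hq1 : q ≤ 1) : IsProbabilityMeasure (bernoulliPi ι q hq1) := by
  unfold bernoulliPi; infer_instance

lemma integral_bernoulliPi_comp_eval (hq0 : 0 ≤ q) (hq1 : q ≤ 1) (x : ι) (g : Bool → ℝ) :
    ∫ ω, g (ω x) ∂bernoulliPi ι q hq1 = q * g true + (1 - q) * g false := by
  rw [bernoulliPi, integral_comp_eval .of_discrete, PMF.integral_eq_sum, Fintype.sum_bool]
  simp [PMF.bernoulli_apply, Real.coe_toNNReal _ hq0,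
    ENNReal.toReal_sub_of_le (ENNReal.coe_le_one_iff.mpr (Real.toNNReal_le_one.mpr hq1))]

lemma integral_maskD (hq0 : 0 < q) (hq1 : q ≤ 1) (x : ι) :
    ∫ ω, maskD q ω x ∂bernoulliPi ι q hq1 = 1 := by
  simp only [maskD]
  rw [integral_bernoulliPi_comp_eval hq0.le hq1 x (fun b => (if b then (1 : ℝ) else 0) / q)]
  field_simp
  simp

lemma integral_maskD_sq (hq0 : 0 < q) (hq1 : q ≤ 1) (x : ι) :
    ∫ ω, maskD q ω x ^ 2 ∂bernoulliPi ι q hq1 = 1 / q := by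
  simp only [maskD]
  rw [integral_bernoulliPi_comp_eval hq0.le hq1 x (fun b => ((if b then (1 : ℝ) else 0) / q) ^ 2)]
  field_simp
  simp

lemma indepFun_maskD (hq1 : q ≤ 1) {x y : ι} (hxy : x ≠ y) :
    IndepFun (fun ω => maskD q ω x) (fun ω => maskD q ω y) (bernoulliPi ι q hq1) :=
  ((iIndepFun_pi (X := fun _ => id) fun _ => aemeasurable_id).indepFun hxy).comp
    (φ := fun b : Bool => (if b then (1 : ℝ) else 0) / q)
    (ψ := fun b : Bool => (if b then (1 : ℝ) else 0) / q) .of_discrete .of_discrete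

lemma integral_maskD_mul_maskD (hq0 : 0 < q) (hq1 : q ≤ 1) {x y : ι} (hxy : x ≠ y) :
    ∫ ω, maskD q ω x * maskD q ω y ∂bernoulliPi ι q hq1 = 1 := by
  rw [(indepFun_maskD hq1 hxy).integral_fun_mul_eq_mul_integral .of_discrete .of_discrete,
    integral_maskD hq0 hq1, integral_maskD hq0 hq1, one_mul]

lemma integral_sq_maskD_mul_sub_maskD_mul (hq0 : 0 < q) (hq1 : q ≤ 1) {x y : ι} (hxy : x ≠ y)
    (a b : ℝ) :
    ∫ ω, (maskD q ω x * a - maskD q ω y * b) ^ 2 ∂bernoulliPi ι q hq1 =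
      (a - b) ^ 2 + (1 - q) / q * (a ^ 2 + b ^ 2) := by
  have hexpand : ∀ ω, (maskD q ω x * a - maskD q ω y * b) ^ 2 =
      a ^ 2 * maskD q ω x ^ 2 + (b ^ 2 * maskD q ω y ^ 2 -
        2 * a * b * (maskD q ω x * maskD q ω y)) := fun ω => by ring
  simp_rw [hexpand]
  rw [integral_add .of_finite .of_finite, integral_sub .of_finite .of_finite,
    integral_const_mul, integral_const_mul, integral_const_mul, integral_maskD_sq hq0 hq1,
    integral_maskD_sq hq0 hq1, integral_maskD_mul_maskD hq0 hq1 hxy]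
  field_simp
  ring

end Dropout

section Grid

variable {H W : ℕ} (c : ℤ × ℤ → ℤ × ℤ → ℝ)

lemma adjZ_comm (p p' : ℤ × ℤ) : adjZ p p' = adjZ p' p := by
  rw [adjZ, adjZ, abs_sub_comm p.1, abs_sub_comm p.2]

lemma adjZ_irrefl (p : ℤ × ℤ) : ¬adjZ p p := by
  simp [adjZ]

lemma ne_of_adjZ_gridZ {x y : GridPt H W} (hadj : adjZ (gridZ x) (gridZ y)) : x ≠ y := by
  rintro rfl
  exact adjZ_irrefl _ hadj

lemma sum_sum_adjZ_mul_sq_add_sq (hsym : ∀ p p' : ℤ × ℤ, c p p' = c p' p) (h : GridPt H W → ℝ) :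
    ∑ x : GridPt H W, ∑ y : GridPt H W,
        (if adjZ (gridZ x) (gridZ y) then c (gridZ x) (gridZ y) else 0) * (h x ^ 2 + h y ^ 2) =
      2 * ∑ x : GridPt H W, dInt c x * h x ^ 2 := by
  have hswap : ∑ x : GridPt H W, ∑ y : GridPt H W,
      (if adjZ (gridZ x) (gridZ y) then c (gridZ x) (gridZ y) else 0) * h y ^ 2 =
      ∑ x : GridPt H W, ∑ y : GridPt H W,
      (if adjZ (gridZ x) (gridZ y) then c (gridZ x) (gridZ y) else 0) * h x ^ 2 := by
    rw [sum_comm]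
    refine sum_congr rfl fun y _ => sum_congr rfl fun x _ => ?_
    rw [adjZ_comm, hsym]
  simp_rw [mul_add, sum_add_distrib, hswap, dInt, sum_mul]
  ring

theorem integral_Eint_maskD_mul (hsym : ∀ p p' : ℤ × ℤ, c p p' = c p' p) {q : ℝ} (hq0 : 0 < q)
    (hq1 : q ≤ 1) (h : GridPt H W → ℝ) :
    ∫ ω, Eint c (fun x => maskD q ω x * h x) ∂bernoulliPi (GridPt H W) q hq1 =
      Eint c h + (1 - q) / q * ((∑ x : GridPt H W, dInt c x * h x ^ 2) / 2) := by
  have hterm : ∀ x y : GridPt H W,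
      ∫ ω, (if adjZ (gridZ x) (gridZ y) then
          c (gridZ x) (gridZ y) * (maskD q ω x * h x - maskD q ω y * h y) ^ 2 else 0)
        ∂bernoulliPi (GridPt H W) q hq1 =
      (if adjZ (gridZ x) (gridZ y) then c (gridZ x) (gridZ y) * (h x - h y) ^ 2 else 0) +
        (1 - q) / q * ((if adjZ (gridZ x) (gridZ y) then c (gridZ x) (gridZ y) else 0) *
          (h x ^ 2 + h y ^ 2)) := by
    intro x y
    split_ifs with hadj
    · rw [integral_const_mul,
        integral_sq_maskD_mul_sub_maskD_mul hq0 hq1 (ne_of_adjZ_gridZ hadj)]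
      ring
    · simp
  calc ∫ ω, Eint c (fun x => maskD q ω x * h x) ∂bernoulliPi (GridPt H W) q hq1
      = 1 / 4 * ∑ x : GridPt H W, ∑ y : GridPt H W,
          ∫ ω, (if adjZ (gridZ x) (gridZ y) then
            c (gridZ x) (gridZ y) * (maskD q ω x * h x - maskD q ω y * h y) ^ 2 else 0)
          ∂bernoulliPi (GridPt H W) q hq1 := by
        simp only [Eint]
        rw [integral_const_mul, integral_finsetSum _ fun _ _ => .of_finite]
        simp_rw [integral_finsetSum _ fun _ _ => Integrable.of_finite]
    _ = Eint c h + (1 - q) / q * ((∑ x : GridPt H W, dInt c x * h x ^ 2) / 2) := by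
        simp_rw [hterm, sum_add_distrib, ← mul_sum, sum_sum_adjZ_mul_sq_add_sq c hsym, Eint]
        ring

end Grid

theorem dropout_coherence_amplification_general {H W : ℕ}
    (c : ℤ × ℤ → ℤ × ℤ → ℝ)
    (hsym : ∀ p q : ℤ × ℤ, c p q = c q p)
    (q : ℝ) (hq0 : 0 < q) (hq1 : q ≤ 1)
    (h : GridPt H W → ℝ) (hE : 0 < Eint c h) :
    (∫ ω, Eint c (fun x => maskD q ω x * h x) ∂(bernoulliPi (GridPt H W) q hq1)) /
        Eint c h =
      1 + ((1 - q) / q) *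
        ((∑ x : GridPt H W, dInt c x * (h x) ^ 2) / (2 * Eint c h)) := by
  rw [integral_Eint_maskD_mul c hsym hq0 hq1 h]
  field_simp [hE.ne']

/-- Coherence amplification factor for inverted dropout: if
`𝓔_int(h) > 0` and `κ(h) = (∑_x d_x^int h(x)²)/(2 𝓔_int(h))`, then
`𝔼[𝓔_int(m_q ⊙ h)] / 𝓔_int(h) = 1 + ((1−q)/q) κ(h)`. -/
theorem dropout_coherence_amplification {H W : ℕ}
    (c : ℤ × ℤ → ℤ × ℤ → ℝ)
    (hsym : ∀ p q : ℤ × ℤ, c p q = c q p)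
    (hpos : ∀ p q : ℤ × ℤ, adjZ p q → 0 < c p q)
    (q : ℝ) (hq0 : 0 < q) (hq1 : q ≤ 1)
    (h : GridPt H W → ℝ) (hE : 0 < Eint c h) :
    (∫ ω, Eint c (fun x => maskD q ω x * h x) ∂(bernoulliPi (GridPt H W) q hq1)) /
        Eint c h =
      1 + ((1 - q) / q) *
        ((∑ x : GridPt H W, dInt c x * (h x) ^ 2) / (2 * Eint c h)) :=
  dropout_coherence_amplification_general c hsym q hq0 hq1 h hE

end
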